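/- Let t₀ ∈ ℝ, 1 ≤ q ≤ ∞, and h ∈ L^q_loc([t₀,∞)). Suppose there exist constants C₀, η, κ > 0 and f ∈ L^p([t₀,∞)) with 1 ≤ p < ∞ such that for all t' ≥ t ≥ t₀: ‖h‖_{L^q([t,t'])} ≤ C₀ + ‖f‖_{L^p([t,t'])}^η · ‖h‖_{L^q([t,t'])}^κ. Then h ∈ L^q([t₀,∞)). -/

import Mathlib

/-!
On an interval the hypothesis reads `X ≤ C₀ + θ X^κ` with `X = ‖h‖_{L^q}` and
`θ = ‖f‖_{L^p}^η`, and since `f ∈ L^p` with `p < ∞`, `θ` is small on short intervals and on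
intervals far out. For `q < ∞`, once `f` has small tail beyond `T₁`, the map
`T ↦ ‖h‖_{L^q([T₁,T])}` is continuous, vanishes at `T₁` and can never take the value `2C₀`, so it
stays below `2C₀`. For `q = ∞` that map may jump, but the `L^∞` norm on `[a,b]` is the maximum
over a cover by short subintervals, on each of which `θ` is arbitrarily small; this gives
`‖h‖_{L^∞([a,b])} ≤ C₀`. Either way `‖h‖_{L^q([t₀,T])}` is bounded uniformly in `T`, and Fatou's
lemma puts `h` in `L^q([t₀,∞))`.
-/

open Set MeasureTheory Filter Topology
open scoped ENNReal

theorem tendsto_const_add_rpow_mul_nhds_zero (C A : ℝ) {η : ℝ} (hη : 0 < η) :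
    Tendsto (fun ε : ℝ => C + ε ^ η * A) (𝓝 0) (𝓝 C) := by
  simpa [Real.zero_rpow hη.ne'] using
    ((Real.continuousAt_rpow_const 0 η (Or.inr hη.le)).tendsto.mul_const A).const_add C

namespace MeasureTheory

variable {α E F : Type*} [MeasurableSpace α] [NormedAddCommGroup E] [NormedAddCommGroup F]

theorem eLpNorm_exponent_top_add_measure_le_max (f : α → E) (μ ν : Measure α) :
    eLpNorm f ⊤ (μ + ν) ≤ max (eLpNorm f ⊤ μ) (eLpNorm f ⊤ ν) := by
  rw [eLpNorm_exponent_top]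
  refine eLpNormEssSup_le_of_ae_enorm_bound (ae_add_measure_iff.mpr ⟨?_, ?_⟩)
  · filter_upwards [enorm_ae_le_eLpNormEssSup f μ] with x hx
    exact hx.trans (le_max_left _ _)
  · filter_upwards [enorm_ae_le_eLpNormEssSup f ν] with x hx
    exact hx.trans (le_max_right _ _)

theorem eLpNorm_add_measure_le (f : α → E) {q : ℝ≥0∞} (hq : 1 ≤ q) (μ ν : Measure α) :
    eLpNorm f q (μ + ν) ≤ eLpNorm f q μ + eLpNorm f q ν := by
  rcases eq_or_ne q ⊤ with rfl | hq_top
  · exact (eLpNorm_exponent_top_add_measure_le_max f μ ν).trans (max_le le_self_add le_add_self)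
  have hq₀ : q ≠ 0 := (zero_lt_one.trans_le hq).ne'
  have hq_real : 1 ≤ q.toReal := by simpa using ENNReal.toReal_mono hq_top hq
  simp only [eLpNorm_eq_lintegral_rpow_enorm_toReal hq₀ hq_top, lintegral_add_measure]
  exact ENNReal.rpow_add_le_add_rpow _ _ (by positivity)
    ((div_le_one (by positivity)).mpr hq_real)

theorem eLpNorm_exponent_top_restrict_union_le_max (f : α → E) (μ : Measure α) (s t : Set α) :
    eLpNorm f ⊤ (μ.restrict (s ∪ t))
      ≤ max (eLpNorm f ⊤ (μ.restrict s)) (eLpNorm f ⊤ (μ.restrict t)) :=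
  (eLpNorm_mono_measure f (Measure.restrict_union_le _ _)).trans
    (eLpNorm_exponent_top_add_measure_le_max f _ _)

theorem eLpNorm_restrict_union_le (f : α → E) {q : ℝ≥0∞} (hq : 1 ≤ q) (μ : Measure α)
    (s t : Set α) :
    eLpNorm f q (μ.restrict (s ∪ t)) ≤ eLpNorm f q (μ.restrict s) + eLpNorm f q (μ.restrict t) :=
  (eLpNorm_mono_measure f (Measure.restrict_union_le _ _)).trans (eLpNorm_add_measure_le f hq _ _)

theorem eLpNorm_exponent_top_restrict_Icc_le_of_short
    {μ : Measure ℝ} {h : ℝ → E} {a b δ : ℝ} {M : ℝ≥0∞} (hδ : 0 < δ)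
    (hshort : ∀ u v, a ≤ u → v ≤ b → v - u ≤ δ → eLpNorm h ⊤ (μ.restrict (Icc u v)) ≤ M) :
    eLpNorm h ⊤ (μ.restrict (Icc a b)) ≤ M := by
  have hprefix : ∀ n : ℕ, ∀ c ≤ b, c - a ≤ n * δ → eLpNorm h ⊤ (μ.restrict (Icc a c)) ≤ M := by
    intro n
    induction n with
    | zero =>
      intro c hc hca
      simp only [Nat.cast_zero, zero_mul] at hca
      exact hshort a c le_rfl hc (by linarith)
    | succ n ih =>
      intro c hc hca
      by_cases hc_short : c - a ≤ δ
      · exact hshort a c le_rfl hc hc_short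
      calc eLpNorm h ⊤ (μ.restrict (Icc a c))
          ≤ eLpNorm h ⊤ (μ.restrict (Icc a (c - δ) ∪ Icc (c - δ) c)) :=
            eLpNorm_mono_measure _ (Measure.restrict_mono Icc_subset_Icc_union_Icc le_rfl)
        _ ≤ max (eLpNorm h ⊤ (μ.restrict (Icc a (c - δ))))
            (eLpNorm h ⊤ (μ.restrict (Icc (c - δ) c))) :=
            eLpNorm_exponent_top_restrict_union_le_max h μ _ _
        _ ≤ M := by
            push_cast at hca
            exact max_le (ih _ (by linarith) (by linarith))
              (hshort _ _ (by linarith) hc (by linarith))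
  obtain ⟨n, hn⟩ := exists_nat_ge ((b - a) / δ)
  exact hprefix n b le_rfl ((div_le_iff₀ hδ).mp hn)

theorem continuousOn_toReal_eLpNorm_restrict_Icc {μ : Measure ℝ} [NullSingletonClass μ]
    {h : ℝ → E} {q : ℝ≥0∞} (hq₀ : q ≠ 0) (hq : q ≠ ⊤) {a b : ℝ}
    (hh : MemLp h q (μ.restrict (Icc a b))) :
    ContinuousOn (fun t => (eLpNorm h q (μ.restrict (Icc a t))).toReal) (Icc a b) := by
  have hprim := intervalIntegral.continuousOn_primitive_Icc (hh.integrable_norm_rpow hq₀ hq)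
  refine (hprim.rpow_const (p := q.toReal⁻¹) fun _ _ => Or.inr (by positivity)).congr
    fun t ht => ?_
  have hht : MemLp h q (μ.restrict (Icc a t)) :=
    hh.mono_measure (Measure.restrict_mono (Icc_subset_Icc le_rfl ht.2) le_rfl)
  rw [hht.eLpNorm_eq_integral_rpow_norm hq₀ hq, ENNReal.toReal_ofReal (by positivity)]

theorem tendsto_setLIntegral_Ici_atTop {μ : Measure ℝ} {g : ℝ → ℝ≥0∞}
    (hg : ∫⁻ x, g x ∂μ ≠ ∞) : Tendsto (fun T => ∫⁻ x in Ici T, g x ∂μ) atTop (𝓝 0) := by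
  have hfin : ∃ T, μ.withDensity g (Ici T) ≠ ∞ :=
    ⟨0, ne_top_of_le_ne_top hg (by
      rw [withDensity_apply _ measurableSet_Ici]; exact setLIntegral_le_lintegral _ _)⟩
  have hlim := tendsto_measure_iInter_atTop
    (fun _ => measurableSet_Ici.nullMeasurableSet) antitone_Ici hfin
  have hempty : (⋂ T : ℝ, Ici T) = ∅ := by
    simpa [eq_empty_iff_forall_notMem] using fun x => exists_gt x
  rw [hempty, measure_empty] at hlim
  exact hlim.congr fun T => withDensity_apply _ measurableSet_Ici

theorem MemLp.tendsto_eLpNorm_restrict_Ici_atTop {μ : Measure ℝ} {f : ℝ → E} {p : ℝ≥0∞}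
    (hp₀ : p ≠ 0) (hp : p ≠ ⊤) (hf : MemLp f p μ) :
    Tendsto (fun T => eLpNorm f p (μ.restrict (Ici T))) atTop (𝓝 0) := by
  simp_rw [eLpNorm_eq_lintegral_rpow_enorm_toReal hp₀ hp]
  have hlim := tendsto_setLIntegral_Ici_atTop
    (lintegral_rpow_enorm_lt_top_of_eLpNorm_lt_top hp₀ hp hf.2).ne
  have hp_pos : 0 < 1 / p.toReal := by
    have := ENNReal.toReal_pos hp₀ hp; positivity
  have hcont := (ENNReal.continuous_rpow_const (y := 1 / p.toReal)).tendsto 0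
  rw [ENNReal.zero_rpow_of_pos hp_pos] at hcont
  exact hcont.comp hlim

theorem memLp_restrict_Ici_of_eLpNorm_restrict_Icc_le {μ : Measure ℝ} {h : ℝ → E}
    {q B : ℝ≥0∞} {t₀ : ℝ} (hB : B ≠ ⊤)
    (hmeas : ∀ T, AEStronglyMeasurable h (μ.restrict (Icc t₀ T)))
    (hle : ∀ T, eLpNorm h q (μ.restrict (Icc t₀ T)) ≤ B) :
    MemLp h q (μ.restrict (Ici t₀)) := by
  set hₙ : ℕ → ℝ → E := fun n => (Icc t₀ (t₀ + n)).indicator h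
  have hrestrict : ∀ n : ℕ, (μ.restrict (Ici t₀)).restrict (Icc t₀ (t₀ + n))
      = μ.restrict (Icc t₀ (t₀ + n)) := fun n => by
    rw [Measure.restrict_restrict measurableSet_Icc,
      inter_eq_self_of_subset_left Icc_subset_Ici_self]
  have hmeasₙ : ∀ n, AEStronglyMeasurable (hₙ n) (μ.restrict (Ici t₀)) := fun n => by
    rw [aestronglyMeasurable_indicator_iff measurableSet_Icc, hrestrict]
    exact hmeas _
  have hlim : ∀ᵐ x ∂μ.restrict (Ici t₀), Tendsto (fun n => hₙ n x) atTop (𝓝 (h x)) := by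
    filter_upwards [ae_restrict_mem measurableSet_Ici] with x hx
    refine tendsto_const_nhds.congr' ?_
    filter_upwards [eventually_ge_atTop ⌈x - t₀⌉₊] with n hn
    have : x - t₀ ≤ n := (Nat.le_ceil _).trans (Nat.cast_le.mpr hn)
    exact (indicator_of_mem (show x ∈ Icc t₀ (t₀ + n) from ⟨hx, by linarith⟩) h).symm
  have hleₙ : ∀ n, eLpNorm (hₙ n) q (μ.restrict (Ici t₀)) ≤ B := fun n => by
    rw [eLpNorm_indicator_eq_eLpNorm_restrict measurableSet_Icc, hrestrict]
    exact hle _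
  refine ⟨aestronglyMeasurable_of_tendsto_ae atTop hmeasₙ hlim, ?_⟩
  calc eLpNorm h q (μ.restrict (Ici t₀))
      ≤ atTop.liminf fun n => eLpNorm (hₙ n) q (μ.restrict (Ici t₀)) :=
        Lp.eLpNorm_lim_le_liminf_eLpNorm hmeasₙ h hlim
    _ ≤ B := (liminf_le_liminf (Eventually.of_forall hleₙ)).trans_eq (liminf_const B)
    _ < ⊤ := hB.lt_top

theorem MemLp.exists_eLpNorm_restrict_Icc_le_of_sub_le {f : ℝ → F} {p : ℝ≥0∞} {t₀ ε : ℝ}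
    (hp₁ : 1 ≤ p) (hp : p ≠ ⊤) (hf : MemLp f p (volume.restrict (Ici t₀))) (hε : 0 < ε) :
    ∃ δ > 0, ∀ u v, t₀ ≤ u → v - u ≤ δ →
      eLpNorm f p (volume.restrict (Icc u v)) ≤ ENNReal.ofReal ε := by
  obtain ⟨δ, hδ, hfδ⟩ := hf.eLpNorm_indicator_le hp₁ hp hε
  refine ⟨δ, hδ, fun u v hu huv => ?_⟩
  have hvol : volume.restrict (Ici t₀) (Icc u v) ≤ ENNReal.ofReal δ := by
    calc volume.restrict (Ici t₀) (Icc u v) ≤ volume (Icc u v) := Measure.restrict_apply_le _ _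
      _ ≤ ENNReal.ofReal δ := by rw [Real.volume_Icc]; exact ENNReal.ofReal_le_ofReal huv
  have hsub : Icc u v ⊆ Ici t₀ := fun x hx => hu.trans hx.1
  simpa [eLpNorm_indicator_eq_eLpNorm_restrict measurableSet_Icc,
    Measure.restrict_restrict measurableSet_Icc, inter_eq_self_of_subset_left hsub]
    using hfδ _ measurableSet_Icc hvol

theorem MemLp.exists_eLpNorm_restrict_Icc_le_of_ge {f : ℝ → F} {p : ℝ≥0∞} {t₀ ε : ℝ}
    (hp₀ : p ≠ 0) (hp : p ≠ ⊤) (hf : MemLp f p (volume.restrict (Ici t₀))) (hε : 0 < ε) :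
    ∃ T₁ ≥ t₀, ∀ u v, T₁ ≤ u → eLpNorm f p (volume.restrict (Icc u v)) ≤ ENNReal.ofReal ε := by
  obtain ⟨T₁, hfT₁, hT₁⟩ : ∃ T₁, eLpNorm f p ((volume.restrict (Ici t₀)).restrict (Ici T₁))
      < ENNReal.ofReal ε ∧ t₀ ≤ T₁ :=
    (((hf.tendsto_eLpNorm_restrict_Ici_atTop hp₀ hp).eventually_lt_const
      (ENNReal.ofReal_pos.mpr hε)).and (eventually_ge_atTop t₀)).exists
  refine ⟨T₁, hT₁, fun u v hu => le_trans (eLpNorm_mono_measure _ ?_) hfT₁.le⟩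
  rw [Measure.restrict_restrict measurableSet_Ici]
  exact Measure.restrict_mono
    (fun x hx => show x ∈ Ici T₁ ∩ Ici t₀ from ⟨hu.trans hx.1, (hT₁.trans hu).trans hx.1⟩) le_rfl

theorem eLpNorm_exponent_top_restrict_Icc_le_of_bootstrap {h : ℝ → E} {f : ℝ → F}
    {p : ℝ≥0∞} {t₀ C₀ η κ a b : ℝ} (hC₀ : 0 ≤ C₀) (hη : 0 < η) (hκ : 0 ≤ κ)
    (hp₁ : 1 ≤ p) (hp : p ≠ ⊤) (hf : MemLp f p (volume.restrict (Ici t₀)))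
    (hh : MemLp h ⊤ (volume.restrict (Icc a b))) (ha : t₀ ≤ a)
    (hineq : ∀ t t' : ℝ, t₀ ≤ t → t ≤ t' →
      (eLpNorm h ⊤ (volume.restrict (Icc t t'))).toReal
        ≤ C₀ + (eLpNorm f p (volume.restrict (Icc t t'))).toReal ^ η *
            (eLpNorm h ⊤ (volume.restrict (Icc t t'))).toReal ^ κ) :
    eLpNorm h ⊤ (volume.restrict (Icc a b)) ≤ ENNReal.ofReal C₀ := by
  set X := (eLpNorm h ⊤ (volume.restrict (Icc a b))).toReal
  suffices hX : ∀ ε > 0, X ≤ C₀ + ε ^ η * X ^ κ by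
    have hlim := (tendsto_const_add_rpow_mul_nhds_zero C₀ (X ^ κ) hη).mono_left
      (nhdsWithin_le_nhds (s := Ioi 0))
    exact (ENNReal.le_ofReal_iff_toReal_le hh.2.ne hC₀).mpr
      (ge_of_tendsto hlim (eventually_nhdsWithin_of_forall hX))
  intro ε hε
  obtain ⟨δ, hδ, hfδ⟩ := hf.exists_eLpNorm_restrict_Icc_le_of_sub_le hp₁ hp hε
  refine ENNReal.toReal_le_of_le_ofReal (by positivity)
    (eLpNorm_exponent_top_restrict_Icc_le_of_short hδ fun u v hu hv huv => ?_)
  rcases lt_or_ge v u with hvu | huv'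
  · simp [Icc_eq_empty_of_lt hvu]
  have hJ : eLpNorm h ⊤ (volume.restrict (Icc u v)) ≤ eLpNorm h ⊤ (volume.restrict (Icc a b)) :=
    eLpNorm_mono_measure _ (Measure.restrict_mono (Icc_subset_Icc hu hv) le_rfl)
  have hY : (eLpNorm h ⊤ (volume.restrict (Icc u v))).toReal ≤ X :=
    ENNReal.toReal_mono hh.2.ne hJ
  have hfε : (eLpNorm f p (volume.restrict (Icc u v))).toReal ≤ ε :=
    ENNReal.toReal_le_of_le_ofReal hε.le (hfδ u v (ha.trans hu) huv)
  refine (ENNReal.le_ofReal_iff_toReal_le (ne_top_of_le_ne_top hh.2.ne hJ) (by positivity)).mpr ?_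
  calc (eLpNorm h ⊤ (volume.restrict (Icc u v))).toReal
      ≤ C₀ + (eLpNorm f p (volume.restrict (Icc u v))).toReal ^ η *
          (eLpNorm h ⊤ (volume.restrict (Icc u v))).toReal ^ κ := hineq u v (ha.trans hu) huv'
    _ ≤ C₀ + ε ^ η * X ^ κ := by gcongr

theorem exists_eLpNorm_restrict_Icc_le_of_bootstrap {h : ℝ → E} {f : ℝ → F}
    {q p : ℝ≥0∞} {t₀ C₀ η κ : ℝ} (hq₀ : q ≠ 0) (hq : q ≠ ⊤) (hC₀ : 0 < C₀) (hη : 0 < η)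
    (hp₀ : p ≠ 0) (hp : p ≠ ⊤) (hf : MemLp f p (volume.restrict (Ici t₀)))
    (hloc : ∀ a b : ℝ, t₀ ≤ a → MemLp h q (volume.restrict (Icc a b)))
    (hineq : ∀ t t' : ℝ, t₀ ≤ t → t ≤ t' →
      (eLpNorm h q (volume.restrict (Icc t t'))).toReal
        ≤ C₀ + (eLpNorm f p (volume.restrict (Icc t t'))).toReal ^ η *
            (eLpNorm h q (volume.restrict (Icc t t'))).toReal ^ κ) :
    ∃ T₁ ≥ t₀, ∀ T, eLpNorm h q (volume.restrict (Icc T₁ T)) ≤ ENNReal.ofReal (2 * C₀) := by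
  obtain ⟨ε, hεC, hε⟩ : ∃ ε, C₀ + ε ^ η * (2 * C₀) ^ κ < 2 * C₀ ∧ 0 < ε :=
    ((((tendsto_const_add_rpow_mul_nhds_zero C₀ _ hη).mono_left
      (nhdsWithin_le_nhds (s := Ioi 0))).eventually (gt_mem_nhds (by linarith))).and
      self_mem_nhdsWithin).exists
  obtain ⟨T₁, hT₁, hfT₁⟩ := hf.exists_eLpNorm_restrict_Icc_le_of_ge hp₀ hp hε
  have hfε : ∀ t, (eLpNorm f p (volume.restrict (Icc T₁ t))).toReal ≤ ε := fun t =>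
    ENNReal.toReal_le_of_le_ofReal hε.le (hfT₁ T₁ t le_rfl)
  set g : ℝ → ℝ := fun t => (eLpNorm h q (volume.restrict (Icc T₁ t))).toReal
  have hg_ne : ∀ t, T₁ ≤ t → g t ≠ 2 * C₀ := by
    intro t ht hgt
    have hbound := hineq T₁ t hT₁ ht
    simp only [g] at hgt
    rw [hgt] at hbound
    have hfη : (eLpNorm f p (volume.restrict (Icc T₁ t))).toReal ^ η * (2 * C₀) ^ κ
        ≤ ε ^ η * (2 * C₀) ^ κ := by gcongr; exact hfε t
    linarith
  have hg_lt : ∀ T, T₁ ≤ T → g T < 2 * C₀ := by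
    intro T hT
    by_contra! hgT
    have hg₀ : g T₁ = 0 := by simp [g]
    obtain ⟨t, ht, hgt⟩ := intermediate_value_Icc hT
      (continuousOn_toReal_eLpNorm_restrict_Icc hq₀ hq (hloc T₁ T hT₁))
      ⟨hg₀.le.trans (by positivity), hgT⟩
    exact hg_ne t ht.1 hgt
  refine ⟨T₁, hT₁, fun T => ?_⟩
  calc eLpNorm h q (volume.restrict (Icc T₁ T))
      ≤ eLpNorm h q (volume.restrict (Icc T₁ (max T₁ T))) :=
        eLpNorm_mono_measure _
          (Measure.restrict_mono (Icc_subset_Icc le_rfl (le_max_right _ _)) le_rfl)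
    _ ≤ ENNReal.ofReal (2 * C₀) :=
        (ENNReal.le_ofReal_iff_toReal_le (hloc _ _ hT₁).2.ne (by positivity)).mpr
          (hg_lt _ (le_max_left _ _)).le

end MeasureTheory

/-- Global bootstrap lemma: if `h ∈ L^q_loc([t₀,∞))` satisfies, for all `t' ≥ t ≥ t₀`,
`‖h‖_{L^q([t,t'])} ≤ C₀ + ‖f‖_{L^p([t,t'])}^η ‖h‖_{L^q([t,t'])}^κ` for some `f ∈ L^p([t₀,∞))`
with `1 ≤ p < ∞` and constants `C₀, η, κ > 0`, then `h ∈ L^q([t₀,∞))`. -/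
theorem stmt19 (t₀ : ℝ) (q : ℝ≥0∞) (hq : 1 ≤ q) (h : ℝ → ℝ)
    (hloc : ∀ a b : ℝ, t₀ ≤ a → MemLp h q (volume.restrict (Icc a b)))
    (C₀ η κ : ℝ) (hC₀ : 0 < C₀) (hη : 0 < η) (hκ : 0 < κ)
    (p : ℝ≥0∞) (hp1 : 1 ≤ p) (hp2 : p ≠ ⊤)
    (f : ℝ → ℝ) (hf : MemLp f p (volume.restrict (Ici t₀)))
    (hineq : ∀ t t' : ℝ, t₀ ≤ t → t ≤ t' →
      (eLpNorm h q (volume.restrict (Icc t t'))).toReal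
        ≤ C₀ + (eLpNorm f p (volume.restrict (Icc t t'))).toReal ^ η *
            (eLpNorm h q (volume.restrict (Icc t t'))).toReal ^ κ) :
    MemLp h q (volume.restrict (Ici t₀)) := by
  obtain ⟨B, hB, hle⟩ : ∃ B ≠ ⊤, ∀ T, eLpNorm h q (volume.restrict (Icc t₀ T)) ≤ B := by
    rcases eq_or_ne q ⊤ with rfl | hq_top
    · exact ⟨_, ENNReal.ofReal_ne_top, fun T =>
        eLpNorm_exponent_top_restrict_Icc_le_of_bootstrap hC₀.le hη hκ.le hp1 hp2 hf
          (hloc t₀ T le_rfl) le_rfl hineq⟩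
    have hq₀ : q ≠ 0 := (zero_lt_one.trans_le hq).ne'
    have hp₀ : p ≠ 0 := (zero_lt_one.trans_le hp1).ne'
    obtain ⟨T₁, hT₁, hbound⟩ := exists_eLpNorm_restrict_Icc_le_of_bootstrap
      hq₀ hq_top hC₀ hη hp₀ hp2 hf hloc hineq
    refine ⟨eLpNorm h q (volume.restrict (Icc t₀ T₁)) + ENNReal.ofReal (2 * C₀),
      ENNReal.add_ne_top.mpr ⟨(hloc t₀ T₁ le_rfl).2.ne, ENNReal.ofReal_ne_top⟩, fun T => ?_⟩
    calc eLpNorm h q (volume.restrict (Icc t₀ T))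
        ≤ eLpNorm h q (volume.restrict (Icc t₀ T₁ ∪ Icc T₁ T)) :=
          eLpNorm_mono_measure _ (Measure.restrict_mono Icc_subset_Icc_union_Icc le_rfl)
      _ ≤ eLpNorm h q (volume.restrict (Icc t₀ T₁)) + eLpNorm h q (volume.restrict (Icc T₁ T)) :=
          eLpNorm_restrict_union_le h hq _ _ _
      _ ≤ eLpNorm h q (volume.restrict (Icc t₀ T₁)) + ENNReal.ofReal (2 * C₀) := by
          gcongr; exact hbound T
  exact memLp_restrict_Ici_of_eLpNorm_restrict_Icc_le hB (fun T => (hloc t₀ T le_rfl).1) hle
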